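/- arXiv:2510.11080 — 4 statements merged into one kernel-verified Lean document; each statement's English description precedes it below -/
import Mathlib

section
/- There is a sequent over the one-step logic of the modality ♥ (with ⟦♥⟧_X(f)(U) = sup{f(x) | x ∈ U, f(x) ≠ 1}) that is satisfiable in an infinite one-step model but not in any finite one: the constraint ⟦♥v⟧ = 1 is satisfiable by some infinite set U with valuation f, but for every finite set X, every U ⊆ X, and every f : X → [0,1], sup{f(x) | x ∈ U, f(x) ≠ 1} < 1. -/
/-!
In a finite model the values `f x < 1` with `x ∈ U` form a finite set, which, if nonempty,
contains its supremum; so the supremum is `< 1` (and it is `0` for the empty set).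
In the infinite model given by the inclusion `[0, 1) ↪ ℝ` these values are all of `[0, 1)`,
whose supremum is `1` without being attained.
-/

open Set

theorem Real.sSup_lt_of_finite {s : Set ℝ} {a : ℝ} (hs : s.Finite) (ha : 0 < a)
    (h : ∀ x ∈ s, x < a) : sSup s < a := by
  rcases s.eq_empty_or_nonempty with rfl | hne
  · rwa [Real.sSup_empty]
  · exact (hs.csSup_lt_iff hne).2 h

theorem sSup_values_ne_one_lt_one {X : Type*} [Finite X] (U : Set X) (f : X → ℝ)
    (hf : ∀ x, f x ≤ 1) : sSup {r : ℝ | ∃ x ∈ U, f x ≠ 1 ∧ r = f x} < 1 := by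
  refine Real.sSup_lt_of_finite ((finite_range f).subset ?_) one_pos ?_
  · rintro r ⟨x, -, -, rfl⟩
    exact mem_range_self x
  · rintro r ⟨x, -, hx, rfl⟩
    exact (hf x).lt_of_ne hx

theorem values_ne_one_Ico_zero_one :
    {r : ℝ | ∃ x ∈ (univ : Set (Ico (0:ℝ) 1)), (x : ℝ) ≠ 1 ∧ r = x} = Ico 0 1 := by
  ext r
  constructor
  · rintro ⟨x, -, -, rfl⟩
    exact x.2
  · intro hr
    exact ⟨⟨r, hr⟩, mem_univ _, hr.2.ne, rfl⟩

/-- The one-step logic of `⟦♥⟧_X(f)(U) = sup { f x | x ∈ U, f x ≠ 1 }` is not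
one-step exponentially bounded: the constraint `⟦♥v⟧ = 1` is satisfiable in an
infinite one-step model but in no finite one. -/
theorem stmt5 :
    (∃ (X : Type) (U : Set X) (f : X → ℝ), Infinite X ∧
      (∀ x, f x ∈ Set.Icc (0:ℝ) 1) ∧
      sSup {r : ℝ | ∃ x ∈ U, f x ≠ 1 ∧ r = f x} = 1) ∧
    (∀ (X : Type), Finite X → ∀ (U : Set X) (f : X → ℝ),
      (∀ x, f x ∈ Set.Icc (0:ℝ) 1) →
      sSup {r : ℝ | ∃ x ∈ U, f x ≠ 1 ∧ r = f x} < 1) := by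
  refine ⟨⟨Ico (0:ℝ) 1, univ, (↑), (Ico_infinite one_pos).to_subtype,
    fun x => Ico_subset_Icc_self x.2, ?_⟩, ?_⟩
  · rw [values_ne_one_Ico_zero_one, csSup_Ico one_pos]
  · intro X _ U f hf
    exact sSup_values_ne_one_lt_one U f fun x => (hf x).2
end

section
/- Soundness of the tableau rule for truncated subtraction when the target interval excludes 0: for v ∈ [0,1], a constant c ∈ [0,1], and an interval I ⊆ [0,1] with 0 ∉ I, we have max(0, v - c) ∈ I if and only if v ∈ {x + c | x ∈ I, x + c ≤ 1}. -/
theorem max_mem_iff_of_subset_Ioi {α : Type*} [LinearOrder α] {I : Set α} {b : α}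
    (hI : I ⊆ Set.Ioi b) (a : α) : max b a ∈ I ↔ a ∈ I := by
  rcases le_total a b with h | h
  · rw [max_eq_left h]
    exact iff_of_false (fun hb => lt_irrefl b (hI hb)) fun ha => (hI ha).not_ge h
  · rw [max_eq_right h]

theorem stmt9_general (v c : ℝ) (hv : v ∈ Set.Icc (0:ℝ) 1)
    (I : Set ℝ) (hI : I ⊆ Set.Icc (0:ℝ) 1) (h0 : (0:ℝ) ∉ I) :
    max 0 (v - c) ∈ I ↔ v ∈ {y : ℝ | ∃ x ∈ I, x + c ≤ 1 ∧ y = x + c} := by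
  have hI_pos : I ⊆ Set.Ioi 0 := fun x hx => (hI hx).1.lt_of_ne fun e => h0 (e ▸ hx)
  rw [max_mem_iff_of_subset_Ioi hI_pos]
  constructor
  · exact fun h => ⟨v - c, h, by linarith [hv.2], (sub_add_cancel v c).symm⟩
  · rintro ⟨x, hx, -, rfl⟩
    simpa using hx

/-- Soundness of the `(⊖)` tableau rule in the case `0 ∉ I`:
`max 0 (v - c) ∈ I ↔ v ∈ I + c`. -/
theorem stmt9 (v c : ℝ) (hv : v ∈ Set.Icc (0:ℝ) 1) (hc : c ∈ Set.Icc (0:ℝ) 1)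
    (I : Set ℝ) (hI : I ⊆ Set.Icc (0:ℝ) 1) (h0 : (0:ℝ) ∉ I) :
    max 0 (v - c) ∈ I ↔ v ∈ {y : ℝ | ∃ x ∈ I, x + c ≤ 1 ∧ y = x + c} :=
  stmt9_general v c hv I hI h0
end

section
/- Small model property for one-step quantitative fuzzy ALC: if there exists a set X, a valuation τ : V → (X → [0,1]) (|V| = n) and a discrete distribution μ on X satisfying finitely many constraints of the form μ({x | τ(v_i)(x) > a_i}) > p_i and μ({x | τ(v_i)(x) < b_i}) > 1 - p_i for i = 1,…,n, then there is such a model with at most 2n + 1 states. -/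
/-!
A state `x` is represented by the 0-1 vector recording which of the `2n` threshold conditions it
satisfies. Grouping the states by this vector writes the vector of the `2n` probabilities as a
convex combination of state vectors. Carathéodory's theorem in `ℝ^(2n)` keeps at most `2n + 1` of
them; the states realising these, weighted by the Carathéodory coefficients, give a model in
which every probability, hence every strict constraint, is unchanged.
-/

open Finset

theorem tsum_preimage_eq_sum_indicator_tsum_fiber {X C α : Type*} [Fintype C] [AddCommGroup α]
    [UniformSpace α] [IsUniformAddGroup α] [CompleteSpace α] [T2Space α] {f : X → α}
    (t : X → C) (hf : Summable f) (A : Set C) :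
    ∑' x : t ⁻¹' A, f x = ∑ c, A.indicator (fun c => ∑' x : t ⁻¹' {c}, f x) c := by
  rw [_root_.tsum_subtype, ((hf.indicator _).hasSum.tsum_fiberwise t).unique (hasSum_fintype _)]
  refine sum_congr rfl fun c _ => ?_
  have htx (x : t ⁻¹' {c}) : t x = c := Set.eq_of_mem_singleton x.2
  by_cases hc : c ∈ A
  · rw [Set.indicator_of_mem hc]
    refine tsum_congr fun x => ?_
    exact Set.indicator_of_mem (show (x : X) ∈ t ⁻¹' A by rw [Set.mem_preimage, htx]; exact hc) f
  · rw [Set.indicator_of_notMem hc]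
    refine (tsum_congr fun x : t ⁻¹' {c} => ?_).trans tsum_zero
    exact Set.indicator_of_notMem (show (x : X) ∉ t ⁻¹' A by rw [Set.mem_preimage, htx]; exact hc) f

section IndicatorVector

variable {X κ : Type*} (S : κ → Set X)

noncomputable def indicatorVector (x : X) : κ → ℝ := {k | x ∈ S k}.indicator 1

variable [Fintype κ] {μ : X → ℝ}

theorem mean_indicatorVector_mem_convexHull (hμ0 : ∀ x, 0 ≤ μ x) (hμ : HasSum μ 1) :
    (fun k => ∑' x : S k, μ x) ∈ convexHull ℝ (Set.range (indicatorVector S)) := by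
  classical
  let t : X → Set κ := fun x => {k | x ∈ S k}
  let ν : Set κ → ℝ := fun c => ∑' x : t ⁻¹' {c}, μ x
  have hν0 : ∀ c, 0 ≤ ν c := fun c => tsum_nonneg fun x => hμ0 x
  have hν1 : ∑ c, ν c = 1 := (hasSum_fintype ν).unique (hμ.tsum_fiberwise t)
  have hν_mem : ∀ c, ν c ≠ 0 → c.indicator 1 ∈ Set.range (indicatorVector S) := by
    intro c hc
    obtain ⟨x, hx⟩ : (t ⁻¹' {c}).Nonempty :=
      Set.nonempty_iff_ne_empty.2 fun h => hc (by simp [ν, h])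
    exact ⟨x, by rw [← (hx : t x = c)]; rfl⟩
  have hmean : (fun k => ∑' x : S k, μ x) = ∑ c with ν c ≠ 0, ν c • c.indicator 1 := by
    rw [sum_filter_of_ne fun c _ h => left_ne_zero_of_smul h]
    ext k
    rw [Finset.sum_apply]
    refine (tsum_preimage_eq_sum_indicator_tsum_fiber t hμ.summable {c | k ∈ c}).trans
      (sum_congr rfl fun c _ => ?_)
    by_cases hk : k ∈ c <;> simp [hk, ν]
  rw [hmean]
  exact (convex_convexHull ℝ _).sum_mem (fun c _ => hν0 c) (by rwa [sum_filter_ne_zero])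
    fun c hc => subset_convexHull ℝ _ (hν_mem c (mem_filter.1 hc).2)

end IndicatorVector

theorem exists_fin_convex_combination_of_mem_convexHull {𝕜 E : Type*} [Field 𝕜] [LinearOrder 𝕜]
    [IsStrictOrderedRing 𝕜] [AddCommGroup E] [Module 𝕜 E] [FiniteDimensional 𝕜 E] {s : Set E}
    {y : E} (hy : y ∈ convexHull 𝕜 s) :
    ∃ m ≤ Module.finrank 𝕜 E + 1, ∃ (z : Fin m → E) (w : Fin m → 𝕜), (∀ j, z j ∈ s) ∧
      (∀ j, 0 < w j) ∧ ∑ j, w j = 1 ∧ ∑ j, w j • z j = y := by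
  obtain ⟨ι, _, z, w, hzs, hz, hw0, hw1, hwz⟩ := eq_pos_convex_span_of_mem_convexHull hy
  let ε := (Fintype.equivFin ι).symm
  refine ⟨Fintype.card ι, ?_, z ∘ ε, w ∘ ε, fun j => hzs ⟨_, rfl⟩, fun j => hw0 _, ?_, ?_⟩
  · exact hz.card_le_finrank_succ.trans (by gcongr; exact Submodule.finrank_le _)
  · exact (ε.sum_comp w).trans hw1
  · exact (ε.sum_comp fun i => w i • z i).trans hwz

open Classical in
theorem exists_fin_reweighting {X κ : Type*} [Fintype κ] (S : κ → Set X) {μ : X → ℝ}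
    (hμ0 : ∀ x, 0 ≤ μ x) (hμ : HasSum μ 1) :
    ∃ m ≤ Fintype.card κ + 1, ∃ (x : Fin m → X) (ν : Fin m → ℝ), (∀ j, 0 < ν j) ∧
      ∑ j, ν j = 1 ∧ ∀ k, ∑ j with x j ∈ S k, ν j = ∑' x : S k, μ x := by
  obtain ⟨m, hm, z, ν, hz, hν0, hν1, hνz⟩ :=
    exists_fin_convex_combination_of_mem_convexHull (mean_indicatorVector_mem_convexHull S hμ0 hμ)
  choose x hx using hz
  refine ⟨m, by simpa using hm, x, ν, hν0, hν1, fun k => ?_⟩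
  rw [← congrFun hνz k, Finset.sum_apply, sum_filter]
  refine sum_congr rfl fun j _ => ?_
  simp [← hx j, indicatorVector, Set.indicator_apply]

theorem stmt15_general (n : ℕ) (a b p : Fin n → ℝ)
    (X : Type*) (τ : Fin n → X → ℝ) (hτ : ∀ i x, τ i x ∈ Set.Icc (0:ℝ) 1)
    (μ : X → ℝ) (hμ0 : ∀ x, 0 ≤ μ x) (hμs : Summable μ) (hμ1 : ∑' x, μ x = 1)
    (hlow : ∀ i, p i < ∑' x : {x : X | a i < τ i x}, μ x)
    (hhigh : ∀ i, 1 - p i < ∑' x : {x : X | τ i x < b i}, μ x) :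
    ∃ (m : ℕ), m ≤ 2 * n + 1 ∧
      ∃ (σ : Fin n → Fin m → ℝ) (ν : Fin m → ℝ),
        (∀ i y, σ i y ∈ Set.Icc (0:ℝ) 1) ∧ (∀ y, 0 ≤ ν y) ∧ (∑ y, ν y) = 1 ∧
        (∀ i, p i < ∑ y, if a i < σ i y then ν y else 0) ∧
        (∀ i, 1 - p i < ∑ y, if σ i y < b i then ν y else 0) := by
  let S : Fin n ⊕ Fin n → Set X :=
    Sum.elim (fun i => {x | a i < τ i x}) (fun i => {x | τ i x < b i})
  obtain ⟨m, hm, x, ν, hν0, hν1, hνS⟩ := exists_fin_reweighting S hμ0 (hμ1 ▸ hμs.hasSum)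
  refine ⟨m, by simpa [two_mul] using hm, fun i y => τ i (x y), ν, fun i y => hτ i (x y),
    fun y => (hν0 y).le, hν1, fun i => ?_, fun i => ?_⟩
  · refine (hlow i).trans_eq ((hνS (.inl i)).symm.trans ?_)
    rw [sum_filter]
    congr
  · refine (hhigh i).trans_eq ((hνS (.inr i)).symm.trans ?_)
    rw [sum_filter]
    congr

/-- Small model property for one-step quantitative fuzzy ALC: if the strict
constraints `μ({x | τ i x > a i}) > p i` and `μ({x | τ i x < b i}) > 1 - p i`
are satisfied in some one-step model, they are satisfied in one with at most
`2n + 1` states. -/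
theorem stmt15 (n : ℕ) (a b p : Fin n → ℝ)
    (ha : ∀ i, a i ∈ Set.Icc (0:ℝ) 1) (hb : ∀ i, b i ∈ Set.Icc (0:ℝ) 1)
    (hp : ∀ i, p i ∈ Set.Icc (0:ℝ) 1)
    (X : Type*) (τ : Fin n → X → ℝ) (hτ : ∀ i x, τ i x ∈ Set.Icc (0:ℝ) 1)
    (μ : X → ℝ) (hμ0 : ∀ x, 0 ≤ μ x) (hμs : Summable μ) (hμ1 : ∑' x, μ x = 1)
    (hlow : ∀ i, p i < ∑' x : {x : X | a i < τ i x}, μ x)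
    (hhigh : ∀ i, 1 - p i < ∑' x : {x : X | τ i x < b i}, μ x) :
    ∃ (m : ℕ), m ≤ 2 * n + 1 ∧
      ∃ (σ : Fin n → Fin m → ℝ) (ν : Fin m → ℝ),
        (∀ i y, σ i y ∈ Set.Icc (0:ℝ) 1) ∧ (∀ y, 0 ≤ ν y) ∧ (∑ y, ν y) = 1 ∧
        (∀ i, p i < ∑ y, if a i < σ i y then ν y else 0) ∧
        (∀ i, 1 - p i < ∑ y, if σ i y < b i then ν y else 0) :=
  stmt15_general n a b p X τ hτ μ hμ0 hμs hμ1 hlow hhigh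
end

section
/- The 'generally' modality with h = id is non-expansive: for any discrete probability distribution μ on X and any f, g : X → [0,1], |⟦◯f⟧(μ) - ⟦◯g⟧(μ)| ≤ sup_{x∈X} |f(x) - g(x)|, where ⟦◯f⟧(μ) = sup_{α∈[0,1]} min(α, μ({x | f(x) ≥ α})). -/
/-!
If `f ≤ g + ε` pointwise, every superlevel set `{f ≥ α}` lies inside `{g ≥ α - ε}`, so each term
`min α μ{f ≥ α}` of the supremum defining `gen μ f` is at most `ε` plus the term of `gen μ g` at
`α - ε` (or at most `ε` outright when `α ≤ ε`). With `ε = sup |f - g|` and the roles of `f`, `g`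
exchanged this gives non-expansiveness.
-/

/-- Total measure of a set under a discrete distribution given by a density. -/
noncomputable def pmeas {X : Type*} (μ : X → ℝ) (S : Set X) : ℝ := ∑' x : S, μ x

/-- Semantics of the fuzzy modality `generally` with conversion function `h = id`. -/
noncomputable def gen {X : Type*} (μ : X → ℝ) (f : X → ℝ) : ℝ :=
  ⨆ α : Set.Icc (0:ℝ) 1, min α.1 (pmeas μ {x | f x ≥ α.1})

section

variable {X : Type*} {μ : X → ℝ}

lemma pmeas_nonneg (hμ0 : ∀ x, 0 ≤ μ x) (S : Set X) : 0 ≤ pmeas μ S :=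
  tsum_nonneg fun x => hμ0 x

lemma pmeas_mono (hμ0 : ∀ x, 0 ≤ μ x) (hμs : Summable μ) {S T : Set X} (hST : S ⊆ T) :
    pmeas μ S ≤ pmeas μ T := by
  unfold pmeas
  rw [tsum_subtype, tsum_subtype]
  exact (hμs.indicator S).tsum_le_tsum
    (Set.indicator_le_indicator_of_subset hST hμ0) (hμs.indicator T)

lemma le_gen (μ f : X → ℝ) {α : ℝ} (hα : α ∈ Set.Icc (0:ℝ) 1) :
    min α (pmeas μ {x | f x ≥ α}) ≤ gen μ f :=
  le_ciSup (f := fun β : Set.Icc (0:ℝ) 1 => min β.1 (pmeas μ {x | f x ≥ β.1}))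
    ⟨1, Set.forall_mem_range.2 fun β => (min_le_left _ _).trans β.2.2⟩ ⟨α, hα⟩

lemma gen_nonneg (hμ0 : ∀ x, 0 ≤ μ x) (f : X → ℝ) : 0 ≤ gen μ f :=
  (le_min le_rfl (pmeas_nonneg hμ0 _)).trans (le_gen μ f ⟨le_rfl, zero_le_one⟩)

lemma gen_le_gen_add (hμ0 : ∀ x, 0 ≤ μ x) (hμs : Summable μ) {f g : X → ℝ} {ε : ℝ}
    (hε : 0 ≤ ε) (hfg : ∀ x, f x ≤ g x + ε) : gen μ f ≤ gen μ g + ε := by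
  refine ciSup_le fun ⟨α, _, hα1⟩ => ?_
  rcases le_or_gt α ε with hαε | hεα
  · calc min α (pmeas μ {x | f x ≥ α}) ≤ α := min_le_left _ _
      _ ≤ gen μ g + ε := by linarith [gen_nonneg hμ0 g]
  · have hsub : {x | f x ≥ α} ⊆ {x | g x ≥ α - ε} := fun x (hx : f x ≥ α) => by
      change g x ≥ α - ε
      linarith [hfg x]
    calc min α (pmeas μ {x | f x ≥ α})
        ≤ min (α - ε + ε) (pmeas μ {x | g x ≥ α - ε} + ε) :=
          min_le_min (by linarith) (by linarith [pmeas_mono hμ0 hμs hsub])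
      _ = min (α - ε) (pmeas μ {x | g x ≥ α - ε}) + ε := min_add_add_right _ _ _
      _ ≤ gen μ g + ε := by
          gcongr
          exact le_gen μ g ⟨by linarith, by linarith⟩

end

theorem stmt19_general {X : Type*} (μ : X → ℝ) (hμ0 : ∀ x, 0 ≤ μ x)
    (hμs : Summable μ)
    (f g : X → ℝ) (hf : ∀ x, f x ∈ Set.Icc (0:ℝ) 1) (hg : ∀ x, g x ∈ Set.Icc (0:ℝ) 1) :
    |gen μ f - gen μ g| ≤ ⨆ x, |f x - g x| := by
  set ε := ⨆ x, |f x - g x|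
  have hbdd : BddAbove (Set.range fun x => |f x - g x|) :=
    ⟨1, Set.forall_mem_range.2 fun x =>
      abs_sub_le_of_nonneg_of_le (hf x).1 (hf x).2 (hg x).1 (hg x).2⟩
  have hle : ∀ x, |f x - g x| ≤ ε := le_ciSup hbdd
  have hε : 0 ≤ ε := Real.iSup_nonneg fun x => abs_nonneg _
  rw [abs_sub_le_iff]
  constructor
  · exact sub_le_iff_le_add'.2 <| gen_le_gen_add hμ0 hμs hε fun x => by
      linarith [(abs_le.mp (hle x)).2]
  · exact sub_le_iff_le_add'.2 <| gen_le_gen_add hμ0 hμs hε fun x => by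
      linarith [(abs_le.mp (hle x)).1]

/-- Non-expansiveness of the `generally` modality with `h = id`. -/
theorem stmt19 {X : Type*} (μ : X → ℝ) (hμ0 : ∀ x, 0 ≤ μ x)
    (hμs : Summable μ) (hμ1 : ∑' x, μ x = 1)
    (f g : X → ℝ) (hf : ∀ x, f x ∈ Set.Icc (0:ℝ) 1) (hg : ∀ x, g x ∈ Set.Icc (0:ℝ) 1) :
    |gen μ f - gen μ g| ≤ ⨆ x, |f x - g x| :=
  stmt19_general μ hμ0 hμs f g hf hg
end
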